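/- arXiv:2408.09654 — 2 statements merged into one kernel-verified Lean document; each statement's English description precedes it below -/
import Mathlib

section
/- For a nonempty loopless matroid M on ground set E with an element 0 ∈ E, the reduced characteristic polynomial satisfies χ̄_M(t) = Σ_{F flat, 0 ∉ F} χ_{M^F}(t) · (−t)^{rk(M_F) − 1} · β(M_F), where the sum ranges over all flats F of M not containing 0 (including the empty flat), M^F is the restriction (localization) to F, M_F is the contraction by F, and β is the beta invariant. -/
open scoped Matroid

variable {α : Type*}

/-- The rank of a set in a matroid: the maximum size of an independent subset of the set. -/
noncomputable def Matroid.rkSet (M : Matroid α) (S : Set α) : ℕ :=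
  ⨆ I : {I : Set α // M.Indep I ∧ I ⊆ S}, I.1.ncard

/-- The rank of a matroid: the rank of its ground set. -/
noncomputable def Matroid.rank (M : Matroid α) : ℕ := M.rkSet M.E

/-- Deletion of a set from a matroid. -/
noncomputable def Matroid.del (M : Matroid α) (D : Set α) : Matroid α := M ↾ (M.E \ D)

/-- Contraction of a matroid by a set, defined via duality: `M / C = (M✶ \ C)✶`. -/
noncomputable def Matroid.con (M : Matroid α) (C : Set α) : Matroid α := (M✶.del C)✶

/-- A matroid is loopless if every singleton of the ground set is independent. -/
def Matroid.IsLoopless (M : Matroid α) : Prop := ∀ e ∈ M.E, M.Indep {e}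

/-- A matroid is simple if every (at most two-element) subset `{e, f}` of the ground set is
independent. -/
def Matroid.IsSimple (M : Matroid α) : Prop := ∀ e ∈ M.E, ∀ f ∈ M.E, M.Indep {e, f}

/-- The characteristic polynomial of a matroid, as a function of `t`, given by the
Whitney rank-generating-function formula `χ_M(t) = ∑_{S ⊆ E} (-1)^|S| t^(rk M - rk S)`
(which agrees with the Möbius-function definition for loopless matroids). -/
noncomputable def Matroid.charPoly (M : Matroid α) (t : ℚ) : ℚ :=
  ∑ᶠ (S : Set α) (_ : S ⊆ M.E), (-1 : ℚ) ^ S.ncard * t ^ (M.rank - M.rkSet S)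

/-- The beta invariant of a matroid, via Crapo's formula
`β(M) = (-1)^(rk M) ∑_{S ⊆ E} (-1)^|S| rk S`. -/
noncomputable def Matroid.betaInv (M : Matroid α) : ℚ :=
  (-1 : ℚ) ^ M.rank * ∑ᶠ (S : Set α) (_ : S ⊆ M.E), (-1 : ℚ) ^ S.ncard * (M.rkSet S : ℚ)

/-- The invariant `c_M = -2^(rk M) · χ_M(1/2)`. -/
noncomputable def Matroid.cInv (M : Matroid α) : ℚ :=
  - 2 ^ M.rank * M.charPoly (1/2)

/-
Writing `χ_M(t) = ∑_{S ⊆ E} (-1)^|S| t^(r(M) - r(S))` and pairing `S` with `S ∪ {a}` gives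
`χ_M(t) = (t - 1) ∑_S (-1)^|S| t^(r(M) - r(S) - 1) (r(S ∪ {a}) - r(S))`.
On the other side, expanding `χ_{M^F}` by the same formula and exchanging the sums, the
coefficient of the `S`-term is `-∑ (-1)^r(M_F) β(M_F)` over the flats `F ⊇ S` avoiding `a`.
Crapo's formula gives `(-1)^r(M_F) β(M_F) = ∑_H μ(F, H) (r(H) - r(F))`, with `μ` the Möbius
function of the lattice of flats, so Möbius inversion yields
`∑_{F ⊇ X} (-1)^r(M_F) β(M_F) = r(X) - r(M)`; the flats containing `a` contribute the same sum
for `X ∪ {a}`, and the coefficient is `r(S ∪ {a}) - r(S)`.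
-/

open Set
open scoped Classical

section SubsetSums

variable {R : Type*}

lemma finsum_subset_eq_sum_powerset [AddCommMonoid R] {T : Set α} {u : Finset α} (hTu : T ⊆ u)
    (f : Set α → R) :
    ∑ᶠ (S : Set α) (_ : S ⊆ T), f S = ∑ s ∈ u.powerset with ↑s ⊆ T, f s := by
  have himage : {S | S ⊆ T} =
      ↑((u.powerset.filter (↑· ⊆ T)).image ((↑) : Finset α → Set α)) := by
    ext S
    simp only [Finset.coe_image, Finset.coe_filter, Finset.mem_powerset, mem_image]
    refine ⟨fun hS => ⟨(u.finite_toSet.subset (hS.trans hTu)).toFinset, ?_, by simp⟩, ?_⟩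
    · simpa [Set.Finite.toFinset_subset] using ⟨hS.trans hTu, hS⟩
    · rintro ⟨s, hs, rfl⟩
      exact hs.2
  rw [← Finset.sum_image fun _ _ _ _ h => Finset.coe_injective h, ← finsum_mem_coe_finset,
    ← himage]
  rfl

lemma sum_powerset_filter_subset_neg_one_pow [Ring R] {T : Set α} {u : Finset α} (hTu : T ⊆ u) :
    ∑ s ∈ u.powerset with ↑s ⊆ T, (-1 : R) ^ s.card = if T = ∅ then 1 else 0 := by
  have hfilter : u.powerset.filter (↑· ⊆ T) = (u.filter (· ∈ T)).powerset := by
    ext s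
    simp only [Finset.mem_filter, Finset.mem_powerset, Finset.subset_iff]
    exact ⟨fun h x hx => ⟨h.1 hx, h.2 hx⟩,
      fun h => ⟨fun x hx => (h hx).1, fun x hx => (h hx).2⟩⟩
  have hempty : u.filter (· ∈ T) = ∅ ↔ T = ∅ := by
    simp only [Finset.filter_eq_empty_iff, Set.eq_empty_iff_forall_notMem]
    exact ⟨fun h x hx => h (hTu hx) hx, fun h x _ => h x⟩
  have h := congrArg (Int.cast : ℤ → R)
    (Finset.sum_powerset_neg_one_pow_card (x := u.filter (· ∈ T)))
  push_cast at h
  rw [hfilter, h]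
  exact if_congr hempty rfl rfl

end SubsetSums

lemma Finset.sum_filter_left_eq_ite_of_right {ι K : Type*} [CommRing K] {s : Finset ι}
    {r : ι → ι → Prop} {m : ι → ι → K}
    (h : ∀ x ∈ s, ∀ z ∈ s, ∑ y ∈ s with r y z, m x y = if x = z then 1 else 0)
    {x z : ι} (hx : x ∈ s) (hz : z ∈ s) :
    ∑ y ∈ s with r x y, m y z = if x = z then 1 else 0 := by
  let A : Matrix s s K := Matrix.of fun x y => m x y
  let Z : Matrix s s K := Matrix.of fun y z => if r y z then 1 else 0
  have hAZ : A * Z = 1 := by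
    ext ⟨x', hx'⟩ ⟨z', hz'⟩
    simp only [Matrix.mul_apply, Matrix.one_apply, Subtype.mk.injEq]
    rw [← h x' hx' z' hz', Finset.sum_filter, ← Finset.sum_coe_sort s]
    simp [A, Z]
  have hZA : Z * A = 1 := mul_eq_one_comm.1 hAZ
  have hxz := congrFun (congrFun hZA ⟨x, hx⟩) ⟨z, hz⟩
  simp only [Matrix.mul_apply, Matrix.one_apply, Subtype.mk.injEq] at hxz
  rw [← hxz, Finset.sum_filter, ← Finset.sum_coe_sort s]
  simp [A, Z]

namespace Matroid

variable {M : Matroid α} {I X Y C R F G H K : Set α} {e a : α}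

lemma rkSet_restrict (hXR : X ⊆ R) : (M ↾ R).rkSet X = M.rkSet X :=
  Equiv.iSup_congr (Equiv.subtypeEquivRight fun I => by
    rw [restrict_indep_iff]
    exact ⟨fun h => ⟨h.1.1, h.2⟩, fun h => ⟨⟨h.1, h.2.trans hXR⟩, h.2⟩⟩)
    fun _ => rfl

lemma eRk_contract_add_eRk (M : Matroid α) (hXC : Disjoint X C) :
    (M ／ C).eRk X + M.eRk C = M.eRk (X ∪ C) := by
  obtain ⟨J, hJ⟩ := M.exists_isBasis' C
  obtain ⟨K, hK, hJK⟩ := hJ.indep.subset_isBasis'_of_subset (hJ.subset.trans subset_union_right)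
  have hKC : K ∩ C = J := hJ.inter_eq_of_subset_indep hJK hK.indep
  have hcon : (M ／ C).IsBasis' (K \ C) X := by
    have h := hK.contract_isBasis' hJ (hK.indep.subset (union_subset sdiff_subset hJK))
    rwa [union_sdiff_right, hXC.sdiff_eq_left] at h
  rw [hcon.eRk_eq_encard, hJ.eRk_eq_encard, hK.eRk_eq_encard, ← hKC,
    encard_sdiff_add_encard_inter]

lemma IsFlat.closure_subset_iff_subset (hF : M.IsFlat F) (hX : X ⊆ M.E) :
    M.closure X ⊆ F ↔ X ⊆ F :=
  ⟨(M.subset_closure X hX).trans, fun h => hF.closure ▸ M.closure_subset_closure h⟩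

section Finite

variable [M.Finite]

noncomputable def groundFinset (M : Matroid α) [M.Finite] : Finset α := M.ground_finite.toFinset

@[simp] lemma coe_groundFinset : (M.groundFinset : Set α) = M.E :=
  M.ground_finite.coe_toFinset

@[simp] lemma mem_groundFinset : e ∈ M.groundFinset ↔ e ∈ M.E :=
  M.ground_finite.mem_toFinset

lemma coe_subset_ground_of_mem_powerset {s : Finset α} (hs : s ∈ M.groundFinset.powerset) :
    (s : Set α) ⊆ M.E := by
  simpa using Finset.coe_subset.2 (Finset.mem_powerset.1 hs)

lemma rkSet_eq_ncard_of_isBasis' (hI : M.IsBasis' I X) :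
    M.rkSet X = I.ncard := by
  have hIfin : I.Finite := M.ground_finite.subset hI.indep.subset_ground
  refine le_antisymm (ciSup_le' fun ⟨J, hJ, hJX⟩ => ?_) ?_
  · have hJI : J.encard ≤ I.encard := hI.encard_eq_eRk ▸ hJ.encard_le_eRk_of_subset hJX
    exact ENat.toNat_le_toNat hJI hIfin.encard_lt_top.ne
  · refine le_ciSup_of_le ⟨M.E.ncard, ?_⟩ ⟨I, hI.indep, hI.subset⟩ le_rfl
    rintro n ⟨⟨J, hJ, -⟩, rfl⟩
    exact ncard_le_ncard hJ.subset_ground M.ground_finite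

lemma cast_rkSet_eq (X : Set α) : (M.rkSet X : ℕ∞) = M.eRk X := by
  obtain ⟨I, hI⟩ := M.exists_isBasis' X
  rw [rkSet_eq_ncard_of_isBasis' hI, hI.eRk_eq_encard,
    (M.ground_finite.subset hI.indep.subset_ground).cast_ncard_eq]

lemma rkSet_closure (X : Set α) : M.rkSet (M.closure X) = M.rkSet X := by
  have h := M.eRk_closure_eq X
  rwa [← cast_rkSet_eq, ← cast_rkSet_eq, Nat.cast_inj] at h

lemma rkSet_mono (hXY : X ⊆ Y) : M.rkSet X ≤ M.rkSet Y := by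
  have h := M.eRk_mono hXY
  rwa [← cast_rkSet_eq, ← cast_rkSet_eq, Nat.cast_le] at h

lemma rkSet_insert_of_notMem_closure (he : e ∈ M.E \ M.closure X) :
    M.rkSet (insert e X) = M.rkSet X + 1 := by
  have h := eRk_insert_eq_add_one he
  rwa [← cast_rkSet_eq, ← cast_rkSet_eq, ← Nat.cast_add_one, Nat.cast_inj] at h

lemma rkSet_insert_of_mem_closure (he : e ∈ M.closure X) :
    M.rkSet (insert e X) = M.rkSet X := by
  have h := M.eRk_insert_closure_eq e X
  rwa [insert_eq_of_mem he, eRk_closure_eq, ← cast_rkSet_eq, ← cast_rkSet_eq,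
    Nat.cast_inj, eq_comm] at h

lemma rkSet_contract_add_rkSet (hXC : Disjoint X C) :
    (M ／ C).rkSet X + M.rkSet C = M.rkSet (X ∪ C) := by
  have h := M.eRk_contract_add_eRk hXC
  rwa [← cast_rkSet_eq (M := M ／ C), ← cast_rkSet_eq, ← cast_rkSet_eq, ← Nat.cast_add,
    Nat.cast_inj] at h

lemma rank_contract_add_rkSet (hC : C ⊆ M.E) :
    (M ／ C).rank + M.rkSet C = M.rank := by
  have h := rkSet_contract_add_rkSet (M := M) (X := M.E \ C) disjoint_sdiff_left
  rwa [sdiff_union_of_subset hC] at h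

lemma rkSet_le_rank (X : Set α) : M.rkSet X ≤ M.rank := by
  have h := M.eRk_le_eRank X
  rwa [← eRk_ground, ← cast_rkSet_eq, ← cast_rkSet_eq, Nat.cast_le] at h

lemma rkSet_lt_rank_of_notMem_closure (he : e ∈ M.E \ M.closure X) :
    M.rkSet X < M.rank := by
  have h := rkSet_insert_of_notMem_closure he
  have hle := rkSet_le_rank (M := M) (insert e X)
  omega

noncomputable def flats (M : Matroid α) [M.Finite] : Finset (Set α) :=
  (M.ground_finite.finite_subsets.subset fun _ hF => IsFlat.subset_ground hF :
    {F | M.IsFlat F}.Finite).toFinset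

@[simp] lemma mem_flats : F ∈ M.flats ↔ M.IsFlat F := by
  simp [flats]

/-- Whitney's formula for the Möbius function `μ(F, H)` of the lattice of flats. -/
noncomputable def mobius (M : Matroid α) [M.Finite] (F H : Set α) : ℚ :=
  ∑ s ∈ M.groundFinset.powerset with ↑s ⊆ M.E \ F,
    if M.closure (↑s ∪ F) = H then (-1) ^ s.card else 0

lemma sum_flats_mobius_mul (F : Set α) (g : Set α → ℚ) :
    ∑ H ∈ M.flats, M.mobius F H * g H =
      ∑ s ∈ M.groundFinset.powerset with ↑s ⊆ M.E \ F,
        (-1) ^ s.card * g (M.closure (↑s ∪ F)) := by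
  simp only [mobius, Finset.sum_mul, ite_mul, zero_mul]
  rw [Finset.sum_comm]
  refine Finset.sum_congr rfl fun s _ => ?_
  rw [Finset.sum_ite_eq, if_pos (mem_flats.2 (M.isFlat_closure _))]

lemma sum_mobius_filter_subset (hF : M.IsFlat F) (hK : M.IsFlat K) :
    ∑ H ∈ M.flats with H ⊆ K, M.mobius F H = if F = K then 1 else 0 := by
  have hFE := hF.subset_ground
  have hclosure (s : Finset α) (hs : ↑s ⊆ M.E \ F) :
      M.closure (↑s ∪ F) ⊆ K ↔ ↑s ∪ F ⊆ K :=
    hK.closure_subset_iff_subset (union_subset (hs.trans sdiff_subset) hFE)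
  calc ∑ H ∈ M.flats with H ⊆ K, M.mobius F H
      = ∑ H ∈ M.flats, M.mobius F H * if H ⊆ K then 1 else 0 := by
        simp only [Finset.sum_filter, mul_ite, mul_one, mul_zero]
    _ = ∑ s ∈ M.groundFinset.powerset with ↑s ⊆ M.E \ F ∧ ↑s ∪ F ⊆ K,
          (-1) ^ s.card := by
        rw [sum_flats_mobius_mul, ← Finset.filter_filter,
          Finset.sum_filter (fun s : Finset α => ↑s ∪ F ⊆ K)]
        refine Finset.sum_congr rfl fun s hs => ?_
        rw [hclosure s (Finset.mem_filter.1 hs).2, mul_ite, mul_one, mul_zero]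
    _ = if F = K then 1 else 0 := by
        by_cases hFK : F ⊆ K
        · have hKE : K \ F ⊆ M.groundFinset := by
            simpa using sdiff_subset.trans hK.subset_ground
          have hFK' : F = K ↔ K \ F = ∅ :=
            ⟨fun h => by simp [h], fun h => subset_antisymm hFK (sdiff_eq_empty.1 h)⟩
          rw [if_congr hFK' rfl rfl, ← sum_powerset_filter_subset_neg_one_pow hKE]
          refine Finset.sum_congr (Finset.filter_congr fun s _ => ?_) fun _ _ => rfl
          exact ⟨fun h =>
              subset_sdiff.2 ⟨subset_union_left.trans h.2, (subset_sdiff.1 h.1).2⟩,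
            fun h => ⟨h.trans (sdiff_subset_sdiff_left hK.subset_ground),
              union_subset (h.trans sdiff_subset) hFK⟩⟩
        · rw [if_neg (fun h => hFK h.subset), Finset.filter_false_of_mem
            fun s _ h => hFK (subset_union_right.trans h.2), Finset.sum_empty]

lemma sum_flats_mobius (hF : M.IsFlat F) :
    ∑ H ∈ M.flats, M.mobius F H = if F = M.E then 1 else 0 := by
  rw [← sum_mobius_filter_subset hF M.ground_isFlat,
    Finset.filter_true_of_mem fun H hH => (mem_flats.1 hH).subset_ground]

lemma sum_mobius_filter_supset (hG : M.IsFlat G) (hH : M.IsFlat H) :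
    ∑ F ∈ M.flats with G ⊆ F, M.mobius F H = if G = H then 1 else 0 :=
  Finset.sum_filter_left_eq_ite_of_right
    (fun _ hF _ hK => sum_mobius_filter_subset (mem_flats.1 hF) (mem_flats.1 hK))
    (mem_flats.2 hG) (mem_flats.2 hH)

lemma sum_sum_mobius_mul_rkSet_sub (hX : X ⊆ M.E) :
    ∑ F ∈ M.flats with X ⊆ F, ∑ H ∈ M.flats,
        M.mobius F H * ((M.rkSet H : ℚ) - M.rkSet F) = (M.rkSet X : ℚ) - M.rank := by
  have hfilter : M.flats.filter (X ⊆ ·) = M.flats.filter (M.closure X ⊆ ·) :=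
    Finset.filter_congr fun F hF => ((mem_flats.1 hF).closure_subset_iff_subset hX).symm
  have hrk :
      ∑ F ∈ M.flats with M.closure X ⊆ F, ∑ H ∈ M.flats, M.mobius F H * M.rkSet H =
        (M.rkSet X : ℚ) := by
    rw [Finset.sum_comm]
    simp_rw [← Finset.sum_mul]
    rw [Finset.sum_congr rfl fun H hH => by
      rw [sum_mobius_filter_supset (M.isFlat_closure X) (mem_flats.1 hH)]]
    simp [rkSet_closure]
  have hrank :
      ∑ F ∈ M.flats with M.closure X ⊆ F, ∑ H ∈ M.flats, M.mobius F H * M.rkSet F =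
        (M.rank : ℚ) := by
    simp_rw [← Finset.sum_mul]
    rw [Finset.sum_congr rfl fun F hF => by
      rw [sum_flats_mobius (mem_flats.1 (Finset.mem_filter.1 hF).1)]]
    simp [M.ground_isFlat, M.closure_subset_ground X, rank]
  simp only [hfilter, mul_sub, Finset.sum_sub_distrib, hrk, hrank]

lemma neg_one_pow_mul_betaInv_contract (F : Set α) :
    (-1) ^ (M ／ F).rank * (M ／ F).betaInv =
      ∑ H ∈ M.flats, M.mobius F H * ((M.rkSet H : ℚ) - M.rkSet F) := by
  have hEF : (M ／ F).E ⊆ M.groundFinset := by simp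
  rw [betaInv, ← mul_assoc, ← mul_pow, neg_one_mul, neg_neg, one_pow, one_mul,
    finsum_subset_eq_sum_powerset hEF, sum_flats_mobius_mul]
  refine Finset.sum_congr rfl fun s hs => ?_
  have hsF : Disjoint (s : Set α) F := (subset_sdiff.1 (Finset.mem_filter.1 hs).2).2
  rw [ncard_coe_finset, rkSet_closure, ← rkSet_contract_add_rkSet hsF]
  push_cast
  ring

lemma sum_neg_one_pow_mul_betaInv_contract (hX : X ⊆ M.E) :
    ∑ F ∈ M.flats with X ⊆ F, (-1) ^ (M ／ F).rank * (M ／ F).betaInv =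
      (M.rkSet X : ℚ) - M.rank := by
  rw [← sum_sum_mobius_mul_rkSet_sub hX]
  exact Finset.sum_congr rfl fun F _ => neg_one_pow_mul_betaInv_contract F

lemma sum_neg_one_pow_mul_betaInv_contract_of_notMem (hX : X ⊆ M.E) (ha : a ∈ M.E) :
    ∑ F ∈ M.flats with X ⊆ F ∧ a ∉ F, (-1) ^ (M ／ F).rank * (M ／ F).betaInv =
      (M.rkSet X : ℚ) - M.rkSet (insert a X) := by
  have hsplit := Finset.sum_filter_add_sum_filter_not (M.flats.filter (X ⊆ ·)) (a ∈ ·)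
    fun F => (-1) ^ (M ／ F).rank * (M ／ F).betaInv
  have hmem : M.flats.filter (fun F => X ⊆ F ∧ a ∈ F) = M.flats.filter (insert a X ⊆ ·) :=
    Finset.filter_congr fun F _ => by rw [insert_subset_iff, and_comm]
  rw [Finset.filter_filter, Finset.filter_filter, hmem, sum_neg_one_pow_mul_betaInv_contract hX,
    sum_neg_one_pow_mul_betaInv_contract (insert_subset ha hX)] at hsplit
  linarith

lemma charPoly_restrict (hF : F ⊆ M.E) (t : ℚ) :
    (M ↾ F).charPoly t =
      ∑ s ∈ M.groundFinset.powerset with ↑s ⊆ F,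
        (-1) ^ s.card * t ^ (M.rkSet F - M.rkSet s) := by
  have hFE : (M ↾ F).E ⊆ M.groundFinset := by simpa using hF
  rw [charPoly, finsum_subset_eq_sum_powerset hFE]
  refine Finset.sum_congr rfl fun s hs => ?_
  rw [ncard_coe_finset, rank, restrict_ground_eq, rkSet_restrict subset_rfl,
    rkSet_restrict (Finset.mem_filter.1 hs).2]

lemma charPoly_eq_sub_one_mul (ha : a ∈ M.E) (t : ℚ) :
    M.charPoly t = (t - 1) * ∑ s ∈ M.groundFinset.powerset,
      (-1) ^ s.card * t ^ (M.rank - M.rkSet s - 1) *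
        ((M.rkSet (insert a (s : Set α)) : ℚ) - M.rkSet s) := by
  have hpair (s : Finset α) (has : a ∉ s) :
      (-1) ^ s.card * t ^ (M.rank - M.rkSet s) +
          (-1) ^ (insert a s).card * t ^ (M.rank - M.rkSet (insert a (s : Set α))) =
        (t - 1) * ((-1) ^ s.card * t ^ (M.rank - M.rkSet s - 1) *
          ((M.rkSet (insert a (s : Set α)) : ℚ) - M.rkSet s)) := by
    rw [Finset.card_insert_of_notMem has, pow_succ]
    by_cases hcl : a ∈ M.closure s
    · rw [rkSet_insert_of_mem_closure hcl]
      ring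
    · have hlt := rkSet_lt_rank_of_notMem_closure ⟨ha, hcl⟩
      rw [rkSet_insert_of_notMem_closure ⟨ha, hcl⟩, Nat.sub_add_eq,
        show M.rank - M.rkSet s = M.rank - M.rkSet s - 1 + 1 by omega]
      push_cast
      ring
  have hnot := Finset.notMem_erase a M.groundFinset
  have hzero : ∑ s ∈ (M.groundFinset.erase a).powerset,
      (-1) ^ (insert a s).card * t ^ (M.rank - M.rkSet (↑(insert a s) : Set α) - 1) *
        ((M.rkSet (insert a (↑(insert a s) : Set α)) : ℚ) -
          M.rkSet (↑(insert a s) : Set α)) = 0 :=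
    Finset.sum_eq_zero fun s _ => by simp
  rw [charPoly, finsum_subset_eq_sum_powerset (u := M.groundFinset) (by simp),
    Finset.filter_true_of_mem fun s hs => coe_subset_ground_of_mem_powerset hs,
    ← Finset.insert_erase (mem_groundFinset.2 ha), Finset.sum_powerset_insert hnot,
    Finset.sum_powerset_insert hnot, hzero, add_zero, Finset.mul_sum, ← Finset.sum_add_distrib]
  refine Finset.sum_congr rfl fun s hs => ?_
  simp only [ncard_coe_finset]
  rw [Finset.coe_insert]
  exact hpair s (fun h => hnot (Finset.mem_powerset.1 hs h))

lemma sum_charPoly_restrict_mul_betaInv_contract (ha : a ∈ M.E) (t : ℚ) :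
    ∑ F ∈ M.flats with a ∉ F,
        (M ↾ F).charPoly t * (-t) ^ ((M ／ F).rank - 1) * (M ／ F).betaInv =
      ∑ s ∈ M.groundFinset.powerset, (-1) ^ s.card * t ^ (M.rank - M.rkSet s - 1) *
        ((M.rkSet (insert a (s : Set α)) : ℚ) - M.rkSet s) := by
  have hterm (F : Set α) (hF : F ∈ M.flats.filter (a ∉ ·)) :
      (M ↾ F).charPoly t * (-t) ^ ((M ／ F).rank - 1) * (M ／ F).betaInv =
        ∑ s ∈ M.groundFinset.powerset with ↑s ⊆ F,
          (-1) ^ s.card * t ^ (M.rank - M.rkSet s - 1) *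
            -((-1) ^ (M ／ F).rank * (M ／ F).betaInv) := by
    obtain ⟨hF, haF⟩ := Finset.mem_filter.1 hF
    rw [mem_flats] at hF
    have hrank := rank_contract_add_rkSet hF.subset_ground
    have hlt : M.rkSet F < M.rank :=
      rkSet_lt_rank_of_notMem_closure (e := a) (by rw [hF.closure]; exact ⟨ha, haF⟩)
    obtain ⟨j, hj⟩ : ∃ j, (M ／ F).rank = j + 1 := Nat.exists_eq_add_one.2 (by omega)
    rw [charPoly_restrict hF.subset_ground, Finset.sum_mul, Finset.sum_mul]
    refine Finset.sum_congr rfl fun s hs => ?_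
    have hle := rkSet_mono (M := M) (Finset.mem_filter.1 hs).2
    rw [hj, Nat.add_sub_cancel, show M.rank - M.rkSet s - 1 = (M.rkSet F - M.rkSet s) + j by omega,
      pow_add, neg_pow, pow_succ]
    ring
  rw [Finset.sum_congr rfl hterm, Finset.sum_comm' (t' := M.groundFinset.powerset)
    (s' := fun s => M.flats.filter (fun F => ↑s ⊆ F ∧ a ∉ F))]
  · refine Finset.sum_congr rfl fun s hs => ?_
    have hsE : (s : Set α) ⊆ M.E := coe_subset_ground_of_mem_powerset hs
    rw [← Finset.mul_sum, Finset.sum_neg_distrib,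
      sum_neg_one_pow_mul_betaInv_contract_of_notMem hsE ha]
    ring
  · intro F s
    simp only [Finset.mem_filter, Finset.mem_powerset, mem_flats]
    tauto

end Finite

end Matroid

theorem reduced_charPoly_eq_flat_sum_general (M : Matroid α) (hfin : M.E.Finite)
    (a : α) (ha : a ∈ M.E) :
    ∀ t : ℚ, t ≠ 1 →
      M.charPoly t / (t - 1) =
        ∑ᶠ (F : Set α) (_ : M.IsFlat F ∧ a ∉ F),
          (M ↾ F).charPoly t * (-t) ^ ((M.con F).rank - 1) * (M.con F).betaInv := by
  have : M.Finite := ⟨hfin⟩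
  intro t ht
  have hflats : {F | M.IsFlat F ∧ a ∉ F} = ↑(M.flats.filter (a ∉ ·)) := by ext; simp
  rw [Matroid.charPoly_eq_sub_one_mul ha, mul_div_cancel_left₀ _ (sub_ne_zero.2 ht),
    ← Matroid.sum_charPoly_restrict_mul_betaInv_contract ha, ← finsum_mem_coe_finset,
    ← hflats]
  -- `M.con F` is `M ／ F` by definition
  rfl

/-- For a nonempty loopless matroid `M` and an element `a` of its ground set, the reduced
characteristic polynomial satisfies
`χ̄_M(t) = ∑_{F flat, a ∉ F} χ_{M^F}(t) · (-t)^(rk M_F - 1) · β(M_F)`. -/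
theorem reduced_charPoly_eq_flat_sum (M : Matroid α) (hfin : M.E.Finite)
    (hl : M.IsLoopless) (a : α) (ha : a ∈ M.E) :
    ∀ t : ℚ, t ≠ 1 →
      M.charPoly t / (t - 1) =
        ∑ᶠ (F : Set α) (_ : M.IsFlat F ∧ a ∉ F),
          (M ↾ F).charPoly t * (-t) ^ ((M.con F).rank - 1) * (M.con F).betaInv :=
  reduced_charPoly_eq_flat_sum_general M hfin a ha
end

section
/- Let M be a simple matroid of rank d ≥ 2 such that χ_{M_F}(2) > 0 for every flat F of M (where M_F is the contraction by F). Then M is a Boolean matroid (the free matroid on d elements). -/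
open scoped Matroid

variable {α : Type*}

/-!
If a simple `M` is not free, pick a circuit `C`; simplicity forces `|C| ≥ 3`, so it has three
elements `a, b, x`. Extend `C \ {x}` to a base `B` and contract the flat `F = cl (B \ {a, b})`.
Since `C` is the fundamental circuit of `x` in `B`, the pairs `{a, b}`, `{a, x}`, `{b, x}` are
independent in `M ／ F`, which is therefore a loopless rank-two matroid with at least three points.
For such a matroid with `k` points the Whitney expansion gives `χ(2) = 3 - k`: the empty set
contributes `4`, a set of rank one `2 (-1)^|S|`, a spanning set `(-1)^|S|`, and the nonempty
subsets of each point have alternating sum `-1`. Hence `χ_{M ／ F}(2) ≤ 0`.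
-/

open Set Finset

lemma Finset.sum_powerset_neg_one_pow_card_eq_zero {R : Type*} [Ring R] {s : Finset α}
    (hs : s.Nonempty) : ∑ t ∈ s.powerset, (-1 : R) ^ #t = 0 := by
  simpa using congrArg (Int.cast : ℤ → R) (sum_powerset_neg_one_pow_card_of_nonempty hs)

lemma Finset.sum_powerset_erase_empty_neg_one_pow_card [DecidableEq α] {R : Type*} [Ring R]
    {s : Finset α} (hs : s.Nonempty) : ∑ t ∈ s.powerset.erase ∅, (-1 : R) ^ #t = -1 := by
  have h := sum_erase_add _ (fun t ↦ (-1 : R) ^ #t) (empty_mem_powerset s)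
  rw [sum_powerset_neg_one_pow_card_eq_zero hs] at h
  simpa using eq_neg_of_add_eq_zero_left h

lemma Set.pair_union_sdiff_pair_eq {B : Set α} {x y z : α} (hzB : z ∈ B) (hzy : z ≠ y)
    (hxy : x ≠ y) : {z, x} ∪ (B \ {y, z}) = insert x B \ {y} := by
  ext w
  simp only [mem_union, mem_insert_iff, mem_singleton_iff, mem_sdiff]
  grind

namespace Matroid

variable {M : Matroid α} {C D F J X : Set α} {a b x : α}

lemma con_eq_contract (M : Matroid α) (C : Set α) : M.con C = M ／ C := rfl

lemma cast_rkSet_eq_eRk [M.RankFinite] (X : Set α) : (M.rkSet X : ℕ∞) = M.eRk X := by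
  obtain ⟨I, hI⟩ := M.exists_isBasis' X
  have hIfin : I.Finite := hI.indep.finite
  have hle (J : {J : Set α // M.Indep J ∧ J ⊆ X}) : J.1.ncard ≤ I.ncard := by
    have hJ := J.2.1.encard_le_eRk_of_subset J.2.2
    rw [hI.eRk_eq_encard, ← hIfin.cast_ncard_eq, ← J.2.1.finite.cast_ncard_eq] at hJ
    exact_mod_cast hJ
  have : Nonempty {J : Set α // M.Indep J ∧ J ⊆ X} := ⟨⟨I, hI.indep, hI.subset⟩⟩
  have hrk : M.rkSet X = I.ncard :=
    (ciSup_le hle).antisymm (le_ciSup ⟨_, forall_mem_range.2 hle⟩ ⟨I, hI.indep, hI.subset⟩)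
  rw [hrk, hIfin.cast_ncard_eq, hI.eRk_eq_encard]

lemma cast_rank_eq_eRank [M.RankFinite] : (M.rank : ℕ∞) = M.eRank := by
  rw [rank, cast_rkSet_eq_eRk, eRk_ground]

lemma charPoly_eq_sum_powerset [M.Finite] (t : ℚ) :
    M.charPoly t = ∑ s ∈ M.ground_finite.toFinset.powerset,
      (-1 : ℚ) ^ #s * t ^ (M.rank - M.rkSet s) := by
  have himage : ((↑) : Finset α → Set α) '' ↑M.ground_finite.toFinset.powerset = 𝒫 M.E := by
    ext S
    refine ⟨?_, fun hS ↦ ⟨(M.ground_finite.subset hS).toFinset, ?_, by simp⟩⟩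
    · rintro ⟨s, hs, rfl⟩
      simpa [Set.subset_def] using hs
    · simpa [Finset.subset_iff, Set.subset_def] using hS
  simp_rw [← ncard_coe_finset, ← finsum_mem_coe_finset]
  rw [← finsum_mem_image (f := fun S : Set α ↦ (-1 : ℚ) ^ S.ncard * t ^ (M.rank - M.rkSet S))
    Finset.coe_injective.injOn, himage]
  rfl

/-- For loopless `M` these are the rank-one flats (parallel classes) of `M`. -/
def points (M : Matroid α) : Set (Set α) := (fun e ↦ M.closure {e}) '' M.E

lemma eRk_eq_one_and_closure_eq_iff [M.Loopless] {e : α} (hX : X ⊆ M.E) :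
    M.eRk X = 1 ∧ M.closure X = M.closure {e} ↔ X.Nonempty ∧ X ⊆ M.closure {e} := by
  refine ⟨fun ⟨hr, hcl⟩ ↦ ⟨?_, hcl ▸ M.subset_closure X⟩, fun ⟨⟨z, hz⟩, hXe⟩ ↦ ?_⟩
  · rw [Set.nonempty_iff_ne_empty]
    rintro rfl
    simp at hr
  have hze : M.closure {z} = M.closure {e} :=
    (M.isNonloop_of_loopless (hX hz)).closure_eq_of_mem_closure (hXe hz)
  rw [← hze] at hXe ⊢
  exact ⟨(eRk_eq_one_iff hX).2 ⟨z, hz, M.isNonloop_of_loopless (hX hz), hXe⟩,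
    (M.closure_subset_closure_of_subset_closure hXe).antisymm
      (M.closure_subset_closure (singleton_subset_iff.2 hz))⟩

lemma sum_neg_one_pow_card_of_eRk_eq_one [M.Finite] [M.Loopless] :
    ∑ s ∈ M.ground_finite.toFinset.powerset.filter (fun s : Finset α ↦ M.eRk ↑s = 1),
      (-1 : ℚ) ^ #s = -M.points.ncard := by
  classical
  have hP : M.points.Finite := M.ground_finite.image _
  have hsub {s : Finset α} (hs : s ∈ M.ground_finite.toFinset.powerset) : ↑s ⊆ M.E :=
    M.ground_finite.subset_toFinset.1 (Finset.mem_powerset.1 hs)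
  rw [ncard_eq_toFinset_card _ hP, card_eq_sum_ones, Nat.cast_sum, ← sum_neg_distrib,
    ← sum_fiberwise_of_maps_to (g := fun s : Finset α ↦ M.closure ↑s) (t := hP.toFinset)]
  · refine sum_congr rfl fun L hL ↦ ?_
    obtain ⟨e, he, rfl⟩ := hP.mem_toFinset.1 hL
    have hfin : (M.closure {e}).Finite := M.ground_finite.subset (M.closure_subset_ground _)
    have hfiber : ((M.ground_finite.toFinset.powerset.filter
        fun s : Finset α ↦ M.eRk ↑s = 1).filter fun s : Finset α ↦ M.closure ↑s = M.closure {e})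
          = hfin.toFinset.powerset.erase ∅ := by
      ext s
      simp only [mem_filter, mem_erase, Finset.mem_powerset, ← Finset.coe_subset,
        Finite.coe_toFinset, ← Finset.nonempty_iff_ne_empty, ← Finset.coe_nonempty, and_assoc]
      exact ⟨fun ⟨hsE, h⟩ ↦ (eRk_eq_one_and_closure_eq_iff hsE).1 h,
        fun h ↦ ⟨h.2.trans (M.closure_subset_ground _),
          (eRk_eq_one_and_closure_eq_iff (h.2.trans (M.closure_subset_ground _))).2 h⟩⟩
    rw [hfiber, sum_powerset_erase_empty_neg_one_pow_card
      ⟨e, by simpa using M.mem_closure_self e he⟩]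
    simp
  · intro s hs
    rw [mem_filter] at hs
    obtain ⟨z, hz, -, hsz⟩ := (eRk_eq_one_iff (hsub hs.1)).1 hs.2
    exact hP.mem_toFinset.2 ⟨z, hsub hs.1 hz,
      ((eRk_eq_one_and_closure_eq_iff (hsub hs.1)).2 ⟨⟨z, hz⟩, hsz⟩).2.symm⟩

lemma two_pow_rank_sub_rkSet_eq [M.RankFinite] [M.Loopless] (h : M.eRank = 2)
    (hX : X ⊆ M.E) : (2 : ℚ) ^ (M.rank - M.rkSet X) =
      1 + (if X = ∅ then 3 else 0) + (if M.eRk X = 1 then 1 else 0) := by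
  have hr : M.rank = 2 := by exact_mod_cast cast_rank_eq_eRank.trans h
  have hle : M.rkSet X ≤ 2 := by
    have hX2 := M.eRk_le_eRank X
    rw [← cast_rkSet_eq_eRk, h] at hX2
    exact_mod_cast hX2
  have h0 : M.rkSet X = 0 ↔ X = ∅ := by
    rw [← Nat.cast_inj (R := ℕ∞), cast_rkSet_eq_eRk, Nat.cast_zero, eRk_eq_zero_iff hX,
      loops_eq_empty, subset_empty_iff]
  simp only [hr, ← cast_rkSet_eq_eRk, ← h0]
  interval_cases M.rkSet X <;> norm_num

theorem charPoly_two_eq_three_sub_ncard_points [M.Finite] [M.Loopless] (h : M.eRank = 2) :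
    M.charPoly 2 = 3 - M.points.ncard := by
  classical
  have hE : M.ground_finite.toFinset.Nonempty := by
    rw [Finite.toFinset_nonempty, Set.nonempty_iff_ne_empty]
    intro h0
    simp [← eRk_ground, h0] at h
  rw [charPoly_eq_sum_powerset]
  calc ∑ s ∈ M.ground_finite.toFinset.powerset, (-1 : ℚ) ^ #s * 2 ^ (M.rank - M.rkSet ↑s)
      = ∑ s ∈ M.ground_finite.toFinset.powerset, (-1 : ℚ) ^ #s *
          (1 + (if (↑s : Set α) = ∅ then 3 else 0) + if M.eRk ↑s = 1 then 1 else 0) :=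
        sum_congr rfl fun s hs ↦ by
          rw [two_pow_rank_sub_rkSet_eq h
            (M.ground_finite.subset_toFinset.1 (Finset.mem_powerset.1 hs))]
    _ = 3 - M.points.ncard := by
        simp only [mul_add, mul_ite, mul_one, mul_zero, sum_add_distrib, Finset.coe_eq_empty]
        rw [sum_powerset_neg_one_pow_card_eq_zero hE, sum_ite_eq', if_pos (empty_mem_powerset _),
          ← sum_filter, sum_neg_one_pow_card_of_eRk_eq_one, Finset.card_empty, pow_zero, one_mul]
        ring

lemma IsSimple.two_lt_ncard_of_isCircuit (hs : M.IsSimple) (hC : M.IsCircuit C)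
    (hCfin : C.Finite) : 2 < C.ncard := by
  by_contra! hle
  obtain h1 | h2 : C.ncard = 1 ∨ C.ncard = 2 := by
    have := hC.nonempty.ncard_pos hCfin
    omega
  · obtain ⟨e, rfl⟩ := ncard_eq_one.1 h1
    have he := hC.subset_ground (mem_singleton e)
    exact hC.not_indep (by simpa using hs e he e he)
  · obtain ⟨e, f, -, rfl⟩ := ncard_eq_two.1 h2
    exact hC.not_indep (hs e (hC.subset_ground (by simp)) f (hC.subset_ground (by simp)))

lemma IsFlat.loopless_contract (hF : M.IsFlat F) : (M ／ F).Loopless :=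
  ⟨by rw [contract_loops_eq, hF.closure, sdiff_self]⟩

lemma contract_closure_isBase (hB : M.IsBase (J ∪ D)) (hJD : Disjoint J D) :
    (M ／ M.closure D).IsBase J := by
  have hJ : (M ／ D).IsBase J :=
    (hB.indep.subset subset_union_right).contract_isBase_iff.2 ⟨hB, hJD⟩
  rw [contract_closure_eq_contract_delete, delete_isBase_iff]
  refine hJ.isBasis_ground.isBasis_subset (subset_sdiff.2 ⟨hJ.subset_ground, ?_⟩) sdiff_subset
  exact contract_loops_eq M D ▸ hJ.indep.disjoint_loops

lemma contract_closure_indep (hI : M.Indep (J ∪ D)) (hJD : Disjoint J D) :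
    (M ／ M.closure D).Indep J := by
  obtain ⟨B, hB, hIB⟩ := hI.exists_isBase_superset
  have hBD : (M ／ M.closure D).IsBase (B \ D) :=
    contract_closure_isBase (by rwa [sdiff_union_of_subset (subset_union_right.trans hIB)])
      disjoint_sdiff_left
  exact hBD.indep.subset (subset_sdiff.2 ⟨subset_union_left.trans hIB, hJD⟩)

lemma Indep.closure_singleton_ne (h : M.Indep {a, b}) (hab : a ≠ b) :
    M.closure {a} ≠ M.closure {b} := by
  intro hcl
  have hb := h.notMem_closure_sdiff_of_mem (mem_insert_of_mem a rfl)
  rw [pair_sdiff_right hab, hcl] at hb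
  exact hb (M.mem_closure_self b (h.subset_ground (mem_insert_of_mem a rfl)))

lemma three_le_ncard_points [M.Finite] (hab : M.Indep {a, b}) (hax : M.Indep {a, x})
    (hbx : M.Indep {b, x}) (hab' : a ≠ b) (hax' : a ≠ x) (hbx' : b ≠ x) :
    3 ≤ M.points.ncard := by
  have ha := hab.subset_ground (mem_insert a _)
  have hb := hbx.subset_ground (mem_insert b _)
  have hx := hax.subset_ground (mem_insert_of_mem a rfl)
  calc 3 = ({M.closure {a}, M.closure {b}, M.closure {x}} : Set (Set α)).ncard :=
        (ncard_eq_three.2 ⟨_, _, _, hab.closure_singleton_ne hab', hax.closure_singleton_ne hax',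
          hbx.closure_singleton_ne hbx', rfl⟩).symm
    _ ≤ M.points.ncard := by
        refine ncard_le_ncard ?_ (M.ground_finite.image _)
        simp only [Set.insert_subset_iff, Set.singleton_subset_iff]
        exact ⟨mem_image_of_mem _ ha, mem_image_of_mem _ hb, mem_image_of_mem _ hx⟩

theorem IsSimple.exists_isFlat_three_le_ncard_points_contract [M.Finite] (hs : M.IsSimple)
    (hdep : ¬ M.Indep M.E) :
    ∃ F, M.IsFlat F ∧ (M ／ F).eRank = 2 ∧ 3 ≤ (M ／ F).points.ncard := by
  obtain ⟨C, hCE, hC⟩ := ((not_indep_iff Subset.rfl).1 hdep).exists_isCircuit_subset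
  obtain ⟨a, b, x, ha, hb, hx, hab, hax, hbx⟩ :=
    (two_lt_ncard_iff (M.ground_finite.subset hCE)).1
      (hs.two_lt_ncard_of_isCircuit hC (M.ground_finite.subset hCE))
  obtain ⟨B, hB, hCB⟩ := (hC.sdiff_singleton_indep hx).exists_isBase_superset
  have hCxB : C ⊆ insert x B := sdiff_singleton_subset_iff.1 hCB
  have hxB : x ∉ B := fun hxB ↦
    hC.not_indep (hB.indep.subset (by rwa [insert_eq_of_mem hxB] at hCxB))
  have hexch {y : α} (hy : y ∈ C) : M.Indep (insert x B \ {y}) := by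
    refine (hB.indep.mem_fundCircuit_iff (by rw [hB.closure_eq]; exact hCE hx) hxB).1 ?_
    rwa [← hC.eq_fundCircuit_of_subset hB.indep hCxB]
  have haB : a ∈ B := hCB ⟨ha, hax⟩
  have hbB : b ∈ B := hCB ⟨hb, hbx⟩
  have hbase : (M ／ M.closure (B \ {a, b})).IsBase {a, b} :=
    contract_closure_isBase (by rwa [union_sdiff_cancel (pair_subset haB hbB)])
      disjoint_sdiff_right
  have hpair {y z : α} (hy : y ∈ C) (hxy : x ≠ y) (hzB : z ∈ B) (hzy : z ≠ y) :
      (M ／ M.closure (B \ {y, z})).Indep {z, x} := by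
    refine contract_closure_indep ?_ (by simp [hxB])
    rw [pair_union_sdiff_pair_eq hzB hzy hxy]
    exact hexch hy
  refine ⟨_, M.isFlat_closure (B \ {a, b}), ?_, three_le_ncard_points hbase.indep
    (by rw [pair_comm a b]; exact hpair hb hbx.symm haB hab) (hpair ha hax.symm hbB hab.symm)
    hab hax hbx⟩
  rw [← hbase.encard_eq_eRank, encard_pair hab]

end Matroid

theorem boolean_of_positive_euler_obstruction_general (M : Matroid α) (hfin : M.E.Finite)
    (hs : M.IsSimple)
    (hpos : ∀ F : Set α, M.IsFlat F → 0 < (M.con F).charPoly 2) :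
    M = Matroid.freeOn M.E := by
  have : M.Finite := ⟨hfin⟩
  rw [← Matroid.ground_indep_iff_eq_freeOn]
  by_contra hdep
  obtain ⟨F, hF, hrank, hpoints⟩ := hs.exists_isFlat_three_le_ncard_points_contract hdep
  have := hF.loopless_contract
  have hχ : (M.con F).charPoly 2 ≤ 0 := by
    rw [Matroid.con_eq_contract, Matroid.charPoly_two_eq_three_sub_ncard_points hrank, sub_nonpos]
    exact_mod_cast hpoints
  exact (hpos F hF).not_ge hχ

/-- A simple matroid of rank at least 2 all of whose contractions by flats have positive
characteristic polynomial value at 2 is the Boolean (free) matroid on its ground set. -/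
theorem boolean_of_positive_euler_obstruction (M : Matroid α) (hfin : M.E.Finite)
    (hs : M.IsSimple) (hd : 2 ≤ M.rank)
    (hpos : ∀ F : Set α, M.IsFlat F → 0 < (M.con F).charPoly 2) :
    M = Matroid.freeOn M.E :=
  boolean_of_positive_euler_obstruction_general M hfin hs hpos
end
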